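/- arXiv:1107.5980 — 5 statements merged into one kernel-verified Lean document; each statement's English description precedes it below -/
import Mathlib

section
/- The relation ≿ms on multisets of integers is a total quasi-order whose strict part is ≻ms: ≿ms is reflexive and transitive, for all S, T either S ≿ms T or T ≿ms S, and for all S, T one has S ≻ms T if and only if (S ≿ms T and ¬ T ≿ms S). In particular, ≻ms is transitive and irreflexive, and any two distinct multisets of integers are comparable by ≻ms. -/
/-- The maximum of a multiset of integers (0 for the empty multiset; only used on nonempty ones). -/
def mmax (S : Multiset ℤ) : ℤ := WithBot.unbotD 0 ((S.map (fun x => (x : WithBot ℤ))).sup)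

/-- The minimum of a multiset of integers (0 for the empty multiset; only used on nonempty ones). -/
def mmin (S : Multiset ℤ) : ℤ := WithTop.untopD 0 ((S.map (fun x => (x : WithTop ℤ))).inf)

/-- max order, weak: S ≿max T. -/
def geMax (S T : Multiset ℤ) : Prop := T = 0 ∨ (S ≠ 0 ∧ T ≠ 0 ∧ mmax S ≥ mmax T)

/-- max order, strict: S ≻max T. -/
def gtMax (S T : Multiset ℤ) : Prop := (S ≠ 0 ∧ T ≠ 0 ∧ mmax S > mmax T) ∨ (S ≠ 0 ∧ T = 0)

/-- min order, weak: S ≿min T. -/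
def geMin (S T : Multiset ℤ) : Prop := S = 0 ∨ (S ≠ 0 ∧ T ≠ 0 ∧ mmin S ≥ mmin T)

/-- min order, strict: S ≻min T. -/
def gtMin (S T : Multiset ℤ) : Prop := (S ≠ 0 ∧ T ≠ 0 ∧ mmin S > mmin T) ∨ (S = 0 ∧ T ≠ 0)

/-- multiset order, strict: S ≻ms T. -/
def gtMS (S T : Multiset ℤ) : Prop :=
  ∃ W U V : Multiset ℤ, U ≠ 0 ∧ S = W + U ∧ T = W + V ∧ gtMax U V

/-- multiset order, weak: S ≿ms T. -/
def geMS (S T : Multiset ℤ) : Prop := gtMS S T ∨ S = T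

/-- dual multiset order, strict: S ≻dms T. -/
def gtDMS (S T : Multiset ℤ) : Prop :=
  ∃ W U V : Multiset ℤ, V ≠ 0 ∧ S = W + U ∧ T = W + V ∧ gtMin U V

/-- dual multiset order, weak: S ≿dms T. -/
def geDMS (S T : Multiset ℤ) : Prop := gtDMS S T ∨ S = T

/-!
Comparing `S = W + U` with `T = W + V` where `U ≻max V` amounts to comparing the multiplicity
functions of `S` and `T` at the largest integer where they differ. So `S ≻ms T` holds exactly when
the count function of `T` is below that of `S` in the colexicographic order on `ℤ →₀ ℕ`, which is
a linear order; the assignment `S ↦ count · S` is injective, so all the claims are properties of a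
linear order pulled back along an injection. The one nontrivial direction takes `W = S ∩ T`, where
`S - T` and `T - S` are disjoint and hence have distinct maxima.
-/

-- The coercion in the definition of `mmax` elaborates as the monadic lift `S >>= pure ∘ some`.
theorem mmax_eq_unbotD_sup (S : Multiset ℤ) :
    mmax S = WithBot.unbotD 0 (S.map WithBot.some).sup := by
  simp only [mmax, Multiset.pure_def, Multiset.bind_def, Multiset.bind_singleton, Multiset.map_id']

theorem mmax_eq_of_mem_of_forall_le {S : Multiset ℤ} {y : ℤ} (hy : y ∈ S)
    (hle : ∀ z ∈ S, z ≤ y) : mmax S = y := by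
  have hsup : (S.map WithBot.some).sup = y :=
    le_antisymm (Multiset.sup_le.2 <| by simpa using hle)
      (Multiset.le_sup (Multiset.mem_map_of_mem _ hy))
  rw [mmax_eq_unbotD_sup, hsup, WithBot.unbotD_coe]

theorem mmax_mem {S : Multiset ℤ} (hS : S ≠ 0) : mmax S ∈ S := by
  obtain ⟨y, hy, hle⟩ := S.exists_max_image id hS
  rwa [mmax_eq_of_mem_of_forall_le hy hle]

theorem le_mmax {S : Multiset ℤ} {x : ℤ} (hx : x ∈ S) : x ≤ mmax S := by
  obtain ⟨y, hy, hle⟩ := S.exists_max_image id (by rintro rfl; exact Multiset.notMem_zero x hx)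
  rw [mmax_eq_of_mem_of_forall_le hy hle]
  exact hle x hx

theorem count_eq_zero_of_mmax_lt {S : Multiset ℤ} {x : ℤ} (hx : mmax S < x) : S.count x = 0 :=
  Multiset.count_eq_zero.2 fun hxS => (le_mmax hxS).not_gt hx

theorem gtMax_or_gtMax_of_disjoint {U V : Multiset ℤ} (hUV : Disjoint U V) (hne : U ≠ V) :
    gtMax U V ∨ gtMax V U := by
  rcases eq_or_ne U 0 with rfl | hU
  · exact Or.inr (Or.inr ⟨hne.symm, rfl⟩)
  rcases eq_or_ne V 0 with rfl | hV
  · exact Or.inl (Or.inr ⟨hU, rfl⟩)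
  have hmax : mmax U ≠ mmax V := fun h =>
    Multiset.disjoint_left.1 hUV (mmax_mem hU) (h ▸ mmax_mem hV)
  rcases hmax.lt_or_gt with h | h
  · exact Or.inr (Or.inl ⟨hV, hU, h⟩)
  · exact Or.inl (Or.inl ⟨hU, hV, h⟩)

theorem ne_zero_of_gtMax {U V : Multiset ℤ} (h : gtMax U V) : U ≠ 0 := by
  rcases h with ⟨hU, -⟩ | ⟨hU, -⟩ <;> exact hU

noncomputable def msColex (S : Multiset ℤ) : Colex (ℤ →₀ ℕ) := toColex (Multiset.toFinsupp S)

theorem msColex_add (S T : Multiset ℤ) : msColex (S + T) = msColex S + msColex T := by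
  simp only [msColex, map_add, toColex_add]

theorem msColex_injective : Function.Injective msColex :=
  toColex.injective.comp Multiset.toFinsupp.injective

theorem msColex_lt_of_gtMax {U V : Multiset ℤ} (h : gtMax U V) : msColex V < msColex U := by
  have hV : ∀ x, mmax U ≤ x → V.count x = 0 := by
    rcases h with ⟨-, hV, hlt⟩ | ⟨-, rfl⟩
    · exact fun x hx => count_eq_zero_of_mmax_lt (hlt.trans_le hx)
    · exact fun x _ => Multiset.count_zero x
  refine Finsupp.Colex.lt_iff.2 ⟨mmax U, fun x hx => ?_, ?_⟩
  · change V.count x = U.count x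
    rw [hV x hx.le, count_eq_zero_of_mmax_lt hx]
  · change V.count (mmax U) < U.count (mmax U)
    rw [hV _ le_rfl]
    exact Multiset.count_pos.2 (mmax_mem (ne_zero_of_gtMax h))

theorem gtMS_iff_msColex_lt {S T : Multiset ℤ} : gtMS S T ↔ msColex T < msColex S := by
  constructor
  · rintro ⟨W, U, V, -, rfl, rfl, h⟩
    simpa only [msColex_add] using add_lt_add_right (msColex_lt_of_gtMax h) (msColex W)
  · intro h
    have hS : S = S ∩ T + (S - T) := by rw [add_comm, Multiset.sub_add_inter]
    have hT : T = S ∩ T + (T - S) := by rw [add_comm, Multiset.inter_comm, Multiset.sub_add_inter]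
    have hlt : msColex (T - S) < msColex (S - T) := by
      refine lt_of_add_lt_add_left (a := msColex (S ∩ T)) ?_
      rwa [← msColex_add, ← msColex_add, ← hS, ← hT]
    have hdisj : Disjoint (S - T) (T - S) := Multiset.disjoint_left.2 fun hxS hxT => by
      rw [← Multiset.count_pos, Multiset.count_sub] at hxS hxT; omega
    have hgt : gtMax (S - T) (T - S) := by
      refine (gtMax_or_gtMax_of_disjoint hdisj fun h => hlt.ne (by rw [h])).resolve_right ?_
      exact fun h => (msColex_lt_of_gtMax h).not_gt hlt
    exact ⟨S ∩ T, S - T, T - S, ne_zero_of_gtMax hgt, hS, hT, hgt⟩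

theorem geMS_iff_msColex_le {S T : Multiset ℤ} : geMS S T ↔ msColex T ≤ msColex S := by
  rw [geMS, gtMS_iff_msColex_lt, le_iff_lt_or_eq, msColex_injective.eq_iff, eq_comm]

/-- ≿ms is a total quasi-order whose strict part is ≻ms; in particular ≻ms is
transitive and irreflexive, and any two distinct multisets are comparable by ≻ms. -/
theorem geMS_total_quasiorder :
    (∀ S : Multiset ℤ, geMS S S) ∧
    (∀ S T U : Multiset ℤ, geMS S T → geMS T U → geMS S U) ∧
    (∀ S T : Multiset ℤ, geMS S T ∨ geMS T S) ∧
    (∀ S T : Multiset ℤ, gtMS S T ↔ (geMS S T ∧ ¬ geMS T S)) ∧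
    (∀ S T U : Multiset ℤ, gtMS S T → gtMS T U → gtMS S U) ∧
    (∀ S : Multiset ℤ, ¬ gtMS S S) ∧
    (∀ S T : Multiset ℤ, S ≠ T → gtMS S T ∨ gtMS T S) := by
  simp only [geMS_iff_msColex_le, gtMS_iff_msColex_lt]
  refine ⟨fun S => le_rfl, fun S T U hST hTU => hTU.trans hST, fun S T => le_total _ _,
    fun S T => lt_iff_le_not_ge, fun S T U hST hTU => hTU.trans hST, fun S => lt_irrefl _,
    fun S T hne => (msColex_injective.ne hne).lt_or_gt.symm⟩
end

section
/- The relation ≿dms on multisets of integers is a total quasi-order whose strict part is ≻dms: ≿dms is reflexive and transitive, for all S, T either S ≿dms T or T ≿dms S, and for all S, T one has S ≻dms T if and only if (S ≿dms T and ¬ T ≿dms S). In particular, ≻dms is transitive and irreflexive, and any two distinct multisets of integers are comparable by ≻dms. -/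
/-! Reading multiplicities from the smallest integer upwards, `S ≻dms T` says exactly that at the
least integer where the multiplicities of `S` and `T` differ, `S` has fewer copies: one direction
takes `m = min V`, the other splits `S` and `T` into their common part and two disjoint rests.
So `≻dms` is the strict order of the linear lexicographic order on `ℤ →₀ ℕ`, pulled back along the
injective map `S ↦ count · S`, and `≿dms` is the corresponding non-strict order. -/

lemma coe_mmin {V : Multiset ℤ} (hV : V ≠ 0) :
    ((mmin V : ℤ) : WithTop ℤ) = (V.map (↑)).inf := by
  obtain ⟨y, hy⟩ := Multiset.exists_mem_of_ne_zero hV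
  have hne : (V.map ((↑) : ℤ → WithTop ℤ)).inf ≠ ⊤ :=
    ne_top_of_le_ne_top WithTop.coe_ne_top (Multiset.inf_le (Multiset.mem_map_of_mem _ hy))
  obtain ⟨a, ha⟩ := WithTop.ne_top_iff_exists.1 hne
  -- the coercion in `mmin` elaborates as a monadic lift, i.e. a `Multiset.bind`
  simp only [mmin, Bind.bind, Pure.pure, Multiset.bind_singleton, Multiset.map_id', ← ha]
  rfl

lemma mmin_le {V : Multiset ℤ} {x : ℤ} (hx : x ∈ V) : mmin V ≤ x := by
  have hle := Multiset.inf_le (Multiset.mem_map_of_mem ((↑) : ℤ → WithTop ℤ) hx)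
  rwa [← coe_mmin (by rintro rfl; simp at hx), WithTop.coe_le_coe] at hle

lemma mmin_mem {V : Multiset ℤ} (hV : V ≠ 0) : mmin V ∈ V := by
  obtain ⟨y, hy, hmin⟩ := Multiset.exists_min_image id hV
  have hle : ((y : ℤ) : WithTop ℤ) ≤ (V.map (↑)).inf :=
    Multiset.le_inf.2 fun _ hmem ↦ by
      obtain ⟨z, hz, rfl⟩ := Multiset.mem_map.1 hmem
      exact WithTop.coe_le_coe.2 (hmin z hz)
  rw [← coe_mmin hV, WithTop.coe_le_coe] at hle
  rwa [le_antisymm (mmin_le hy) hle]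

lemma mmin_eq {V : Multiset ℤ} {m : ℤ} (hm : m ∈ V) (hle : ∀ x ∈ V, m ≤ x) : mmin V = m :=
  le_antisymm (mmin_le hm) (hle _ (mmin_mem (by rintro rfl; simp at hm)))

lemma count_eq_zero_of_lt_mmin {V : Multiset ℤ} {x : ℤ} (hx : x < mmin V) : V.count x = 0 :=
  Multiset.count_eq_zero.2 fun hmem ↦ (mmin_le hmem).not_gt hx

noncomputable def countLex (S : Multiset ℤ) : Lex (ℤ →₀ ℕ) := toLex (Multiset.toFinsupp S)

@[simp] lemma ofLex_countLex_apply (S : Multiset ℤ) (x : ℤ) : ofLex (countLex S) x = S.count x :=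
  rfl

lemma countLex_injective : Function.Injective countLex :=
  toLex.injective.comp Multiset.toFinsupp.injective

lemma countLex_add (S T : Multiset ℤ) : countLex (S + T) = countLex S + countLex T := by
  simp [countLex]

lemma countLex_zero : countLex 0 = 0 := by simp [countLex]

lemma gtMin_of_forall_lt {U V : Multiset ℤ} {m : ℤ} (hm : m ∈ V) (hV : ∀ x ∈ V, m ≤ x)
    (hU : ∀ x ∈ U, m < x) : gtMin U V := by
  have hV0 : V ≠ 0 := by rintro rfl; simp at hm
  rcases eq_or_ne U 0 with rfl | hU0
  · exact Or.inr ⟨rfl, hV0⟩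
  · exact Or.inl ⟨hU0, hV0, mmin_eq hm hV ▸ hU _ (mmin_mem hU0)⟩

lemma countLex_lt_of_gtMin {U V : Multiset ℤ} (hV : V ≠ 0) (h : gtMin U V) :
    countLex U < countLex V := by
  have hU : ∀ x ≤ mmin V, U.count x = 0 := by
    rcases h with ⟨-, -, hlt⟩ | ⟨rfl, -⟩
    · exact fun x hx ↦ count_eq_zero_of_lt_mmin (hx.trans_lt hlt)
    · simp
  refine Finsupp.Lex.lt_iff.2 ⟨mmin V, fun x hx ↦ ?_, ?_⟩
  · simp [hU x hx.le, count_eq_zero_of_lt_mmin hx]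
  · simpa [hU _ le_rfl] using Multiset.count_pos.2 (mmin_mem hV)

lemma gtMin_of_countLex_lt {U V : Multiset ℤ} (hUV : Disjoint U V)
    (h : countLex U < countLex V) : gtMin U V := by
  obtain ⟨m, heq, hlt⟩ := Finsupp.Lex.lt_iff.1 h
  simp only [ofLex_countLex_apply] at heq hlt
  have hmV : m ∈ V := Multiset.count_pos.1 (by omega)
  have mem_iff : ∀ x < m, x ∈ U ↔ x ∈ V := fun x hx ↦ by
    simp only [← Multiset.count_pos, heq x hx]
  refine gtMin_of_forall_lt hmV (fun x hx ↦ ?_) (fun x hx ↦ ?_)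
  · exact not_lt.1 fun hlt ↦ Multiset.disjoint_right.1 hUV hx ((mem_iff x hlt).2 hx)
  · rcases lt_trichotomy x m with hlt | rfl | hgt
    · exact absurd ((mem_iff x hlt).1 hx) (Multiset.disjoint_left.1 hUV hx)
    · exact absurd hmV (Multiset.disjoint_left.1 hUV hx)
    · exact hgt

lemma exists_add_add_disjoint (S T : Multiset ℤ) :
    ∃ W U V : Multiset ℤ, S = W + U ∧ T = W + V ∧ Disjoint U V := by
  refine ⟨S ∩ T, S - T, T - S, ?_, ?_, ?_⟩
  · rw [add_comm, Multiset.sub_add_inter]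
  · rw [add_comm, Multiset.inter_comm, Multiset.sub_add_inter]
  · refine Multiset.disjoint_left.2 fun hS hT ↦ ?_
    rw [← Multiset.count_pos, Multiset.count_sub] at hS hT
    omega

lemma gtDMS_iff_countLex_lt {S T : Multiset ℤ} : gtDMS S T ↔ countLex S < countLex T := by
  constructor
  · rintro ⟨W, U, V, hV, rfl, rfl, hUV⟩
    rw [countLex_add, countLex_add]
    exact add_lt_add_right (countLex_lt_of_gtMin hV hUV) _
  · intro h
    obtain ⟨W, U, V, rfl, rfl, hUV⟩ := exists_add_add_disjoint S T
    rw [countLex_add, countLex_add, add_lt_add_iff_left] at h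
    have hV : V ≠ 0 := by
      rintro rfl
      exact (countLex_zero ▸ h).not_ge bot_le
    exact ⟨W, U, V, hV, rfl, rfl, gtMin_of_countLex_lt hUV h⟩

lemma geDMS_iff_countLex_le {S T : Multiset ℤ} : geDMS S T ↔ countLex S ≤ countLex T := by
  rw [geDMS, gtDMS_iff_countLex_lt, le_iff_lt_or_eq, countLex_injective.eq_iff]

/-- ≿dms is a total quasi-order whose strict part is ≻dms; in particular ≻dms is
transitive and irreflexive, and any two distinct multisets are comparable by ≻dms. -/
theorem geDMS_total_quasiorder :
    (∀ S : Multiset ℤ, geDMS S S) ∧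
    (∀ S T U : Multiset ℤ, geDMS S T → geDMS T U → geDMS S U) ∧
    (∀ S T : Multiset ℤ, geDMS S T ∨ geDMS T S) ∧
    (∀ S T : Multiset ℤ, gtDMS S T ↔ (geDMS S T ∧ ¬ geDMS T S)) ∧
    (∀ S T U : Multiset ℤ, gtDMS S T → gtDMS T U → gtDMS S U) ∧
    (∀ S : Multiset ℤ, ¬ gtDMS S S) ∧
    (∀ S T : Multiset ℤ, S ≠ T → gtDMS S T ∨ gtDMS T S) := by
  simp only [geDMS_iff_countLex_le, gtDMS_iff_countLex_lt]
  exact ⟨fun _ ↦ le_rfl, fun _ _ _ ↦ le_trans, fun _ _ ↦ le_total _ _,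
    fun _ _ ↦ lt_iff_le_not_ge, fun _ _ _ ↦ lt_trans, fun _ ↦ lt_irrefl _,
    fun _ _ h ↦ (countLex_injective.ne h).lt_or_gt⟩
end

section
/- For every n ∈ ℕ, the relation ≻dms is well-founded on the set of multisets of integers that have at most n elements and all of whose elements are nonnegative: there is no infinite sequence (S_k) of such multisets with S_k ≻dms S_{k+1} for all k. -/
/-!
Along a `≻dms` chain the pair (min S, -(multiplicity of min S)) never increases lexicographically.
For nonnegative multisets with at most `n` elements it lives in a well-order, so it is eventually
constant, say with minimum `m`. From then on no step touches the copies of `m`: deleting them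
yields a `≻dms` chain of multisets with at most `n - 1` elements, and induction on `n` concludes.
-/

open Multiset

theorem mmin_eq_of_mem {S : Multiset ℤ} {y : ℤ} (hy : y ∈ S) (hmin : ∀ z ∈ S, y ≤ z) :
    mmin S = y := by
  have hinf : (S.map ((↑) : ℤ → WithTop ℤ)).inf = y :=
    le_antisymm (inf_le (mem_map_of_mem _ hy))
      (le_inf.2 fun _ hz => by
        obtain ⟨z, hz', rfl⟩ := mem_map.1 hz
        exact WithTop.coe_le_coe.2 (hmin z hz'))
  simp [mmin, hinf]

theorem mmin_mem_and_le {S : Multiset ℤ} (hS : S ≠ 0) : mmin S ∈ S ∧ ∀ z ∈ S, mmin S ≤ z := by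
  obtain ⟨y, hy, hmin⟩ := exists_min_image id hS
  rw [mmin_eq_of_mem hy hmin]
  exact ⟨hy, hmin⟩

theorem mmin_mem_s8 {S : Multiset ℤ} (hS : S ≠ 0) : mmin S ∈ S :=
  (mmin_mem_and_le hS).1

theorem mmin_le_of_mem {S : Multiset ℤ} {x : ℤ} (hx : x ∈ S) : mmin S ≤ x :=
  (mmin_mem_and_le (by rintro rfl; simp at hx)).2 x hx

theorem card_filter_ne_lt {S : Multiset ℤ} {m : ℤ} (hm : m ∈ S) :
    card (S.filter (· ≠ m)) < card S := by
  have hsplit : card (S.filter (· ≠ m)) + count m S = card S := by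
    rw [← card_replicate (count m S) m, ← filter_eq', add_comm, ← card_add, filter_add_not]
  have := count_pos.2 hm
  omega

theorem gtDMS.right_ne_zero {S T : Multiset ℤ} (h : gtDMS S T) : T ≠ 0 := by
  obtain ⟨W, U, V, hV, -, rfl, -⟩ := h
  simp [hV]

theorem gtMin.notMem_left {U V : Multiset ℤ} {m : ℤ} (h : gtMin U V) (hm : m ≤ mmin V) :
    m ∉ U := by
  rcases h with ⟨-, -, hlt⟩ | ⟨rfl, -⟩
  · exact fun hmU => (mmin_le_of_mem hmU).not_gt (hm.trans_lt hlt)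
  · exact notMem_zero m

theorem mmin_add_le_right {W V : Multiset ℤ} (hV : V ≠ 0) : mmin (W + V) ≤ mmin V :=
  mmin_le_of_mem (mem_add.2 (Or.inr (mmin_mem_s8 hV)))

theorem mmin_le_of_gtDMS {S T : Multiset ℤ} (h : gtDMS S T) (hS : S ≠ 0) : mmin T ≤ mmin S := by
  obtain ⟨W, U, V, hV, rfl, rfl, hUV⟩ := h
  rcases mem_add.1 (mmin_mem_s8 hS) with hW | hU
  · exact mmin_le_of_mem (mem_add.2 (Or.inl hW))
  · rcases hUV with ⟨-, -, hlt⟩ | ⟨rfl, -⟩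
    · calc mmin (W + V) ≤ mmin V := mmin_add_le_right hV
        _ ≤ mmin U := hlt.le
        _ ≤ mmin (W + U) := mmin_le_of_mem hU
    · exact absurd hU (notMem_zero _)

section below_min

variable {S T W U V : Multiset ℤ} {m : ℤ}

theorem count_left_eq_of_gtMin (hUV : gtMin U V) (hV : V ≠ 0) (hm : m ≤ mmin (W + V)) :
    count m (W + U) = count m W := by
  rw [count_add, count_eq_zero.2 (hUV.notMem_left (hm.trans (mmin_add_le_right hV))), add_zero]

theorem count_le_of_gtDMS (h : gtDMS S T) (hm : m ≤ mmin T) : count m S ≤ count m T := by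
  obtain ⟨W, U, V, hV, rfl, rfl, hUV⟩ := h
  rw [count_left_eq_of_gtMin hUV hV hm, count_add]
  exact Nat.le_add_right _ _

theorem gtDMS_filter_ne_of_count_eq (h : gtDMS S T) (hm : m ≤ mmin T)
    (hc : count m S = count m T) : gtDMS (S.filter (· ≠ m)) (T.filter (· ≠ m)) := by
  obtain ⟨W, U, V, hV, rfl, rfl, hUV⟩ := h
  have hmU : m ∉ U := hUV.notMem_left (hm.trans (mmin_add_le_right hV))
  have hmV : m ∉ V := by
    rw [count_left_eq_of_gtMin hUV hV hm, count_add] at hc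
    exact count_eq_zero.1 (by omega)
  have hU : U.filter (· ≠ m) = U := filter_eq_self.2 fun x hx => by rintro rfl; exact hmU hx
  have hV' : V.filter (· ≠ m) = V := filter_eq_self.2 fun x hx => by rintro rfl; exact hmV hx
  exact ⟨W.filter (· ≠ m), U, V, hV, by rw [filter_add, hU], by rw [filter_add, hV'], hUV⟩

end below_min

-- `n - count` encodes `-count`; it is exact on multisets with at most `n` elements.
def minRank (n : ℕ) (S : Multiset ℤ) : ℕ ×ₗ ℕ := toLex ((mmin S).toNat, n - count (mmin S) S)

theorem minRank_le_of_gtDMS {n : ℕ} {S T : Multiset ℤ} (h : gtDMS S T) (hS : S ≠ 0)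
    (hT : ∀ x ∈ T, 0 ≤ x) (hTn : card T ≤ n) : minRank n T ≤ minRank n S := by
  have hmin := mmin_le_of_gtDMS h hS
  have hT0 : 0 ≤ mmin T := hT _ (mmin_mem_s8 h.right_ne_zero)
  rw [minRank, minRank, Prod.Lex.toLex_le_toLex]
  dsimp only
  rcases hmin.lt_or_eq with hlt | heq
  · exact Or.inl (by omega)
  · have hcount := count_le_of_gtDMS h heq.ge
    have hcard := count_le_card (mmin T) T
    rw [heq] at hcard ⊢
    exact Or.inr ⟨rfl, by omega⟩

theorem exists_mmin_count_eventually_const {n : ℕ} {S : ℕ → Multiset ℤ}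
    (hb : ∀ k, card (S k) ≤ n ∧ ∀ x ∈ S k, 0 ≤ x) (hlt : ∀ k, gtDMS (S k) (S (k + 1))) :
    ∃ K m, ∀ k, K ≤ k → m ∈ S k ∧ mmin (S k) = m ∧ count m (S (k + 1)) = count m (S k) := by
  have hne : ∀ k, S (k + 1) ≠ 0 := fun k => (hlt k).right_ne_zero
  obtain ⟨K, hK⟩ := WellFoundedLT.antitone_chain_condition (f := fun k => minRank n (S (k + 1)))
    (antitone_nat_of_succ_le fun k =>
      minRank_le_of_gtDMS (hlt (k + 1)) (hne k) (hb _).2 (hb _).1)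
  set m := mmin (S (K + 1)) with hm
  have hconst : ∀ j, K ≤ j → mmin (S (j + 1)) = m ∧ count m (S (j + 1)) = count m (S (K + 1)) := by
    intro j hj
    have hrank := hK j hj
    simp only [minRank, toLex_inj, Prod.mk.injEq, ← hm] at hrank
    have hK0 := (hb (K + 1)).2 _ (mmin_mem_s8 (hne K))
    have hj0 := (hb (j + 1)).2 _ (mmin_mem_s8 (hne j))
    have hmin : mmin (S (j + 1)) = m := by omega
    have hKn := (count_le_card m (S (K + 1))).trans (hb _).1
    have hjn := (count_le_card m (S (j + 1))).trans (hb _).1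
    rw [hmin] at hrank
    exact ⟨hmin, by omega⟩
  refine ⟨K + 1, m, fun k hk => ?_⟩
  obtain ⟨j, rfl⟩ : ∃ j, k = j + 1 := ⟨k - 1, by omega⟩
  obtain ⟨hmin, hcount⟩ := hconst j (by omega)
  exact ⟨hmin ▸ mmin_mem_s8 (hne j), hmin, (hconst (j + 1) (by omega)).2.trans hcount.symm⟩

/-- ≻dms is well-founded on the multisets of integers with at most `n` elements
all of whose elements are nonnegative. -/
theorem gtDMS_wellFounded (n : ℕ) :
    ¬ ∃ S : ℕ → Multiset ℤ,
        (∀ k, (S k).card ≤ n ∧ ∀ x ∈ S k, 0 ≤ x) ∧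
        (∀ k, gtDMS (S k) (S (k + 1))) := by
  induction n with
  | zero =>
    rintro ⟨S, hb, hlt⟩
    exact (hlt 0).right_ne_zero (card_eq_zero.1 (Nat.le_zero.1 (hb 1).1))
  | succ n ih =>
    rintro ⟨S, hb, hlt⟩
    obtain ⟨K, m, hK⟩ := exists_mmin_count_eventually_const hb hlt
    refine ih ⟨fun i => (S (K + i)).filter (· ≠ m), fun i => ⟨?_, fun x hx => ?_⟩, fun i => ?_⟩
    · exact Nat.lt_succ_iff.1 ((card_filter_ne_lt (hK (K + i) (by omega)).1).trans_le (hb _).1)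
    · exact (hb (K + i)).2 x (mem_filter.1 hx).1
    · exact gtDMS_filter_ne_of_count_eq (hlt (K + i)) (hK (K + i + 1) (by omega)).2.1.ge
        (hK (K + i) (by omega)).2.2.symm
end

section
/- Let S and T be nonempty multisets of integers and let −S denote the image of S under x ↦ −x (Multiset.map Neg.neg). Then: if S ≿ms T then (−T) ≿dms (−S); if S ≻ms T then (−T) ≻dms (−S); if S ≿dms T then (−T) ≿ms (−S); and if S ≻dms T then (−T) ≻ms (−S). -/
lemma mmax_eq_of_mem_of_forall_le_s10 {S : Multiset ℤ} {a : ℤ} (ha : a ∈ S) (hle : ∀ b ∈ S, b ≤ a) :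
    mmax S = a := by
  have hsup : (S.map fun x => (x : WithBot ℤ)).sup = a :=
    le_antisymm (Multiset.sup_le.2 (by simpa using hle))
      (Multiset.le_sup (by simpa using ha))
  rw [mmax, hsup, WithBot.unbotD_coe]

lemma mmin_eq_of_mem_of_forall_le {S : Multiset ℤ} {a : ℤ} (ha : a ∈ S) (hle : ∀ b ∈ S, a ≤ b) :
    mmin S = a := by
  have hinf : (S.map fun x => (x : WithTop ℤ)).inf = a :=
    le_antisymm (Multiset.inf_le (by simpa using ha))
      (Multiset.le_inf.2 (by simpa using hle))
  rw [mmin, hinf, WithTop.untopD_coe]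

lemma mmax_map_neg (S : Multiset ℤ) : mmax (S.map Neg.neg) = -mmin S := by
  rcases eq_or_ne S 0 with rfl | hS
  · rfl -- both sides are the junk value `0`
  obtain ⟨a, ha, hmin⟩ := Multiset.exists_min_image id hS
  rw [mmin_eq_of_mem_of_forall_le ha hmin,
    mmax_eq_of_mem_of_forall_le_s10 (Multiset.mem_map_of_mem _ ha)]
  simpa using hmin

lemma mmin_map_neg (S : Multiset ℤ) : mmin (S.map Neg.neg) = -mmax S := by
  rcases eq_or_ne S 0 with rfl | hS
  · rfl
  obtain ⟨a, ha, hmax⟩ := Multiset.exists_max_image id hS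
  rw [mmax_eq_of_mem_of_forall_le_s10 ha hmax,
    mmin_eq_of_mem_of_forall_le (Multiset.mem_map_of_mem _ ha)]
  simpa using hmax

lemma gtMax.map_neg {U V : Multiset ℤ} (h : gtMax U V) :
    gtMin (V.map Neg.neg) (U.map Neg.neg) := by
  simp only [gtMax, gtMin, ne_eq, Multiset.map_eq_zero, mmin_map_neg, gt_iff_lt,
    neg_lt_neg_iff] at h ⊢
  tauto

lemma gtMin.map_neg {U V : Multiset ℤ} (h : gtMin U V) :
    gtMax (V.map Neg.neg) (U.map Neg.neg) := by
  simp only [gtMax, gtMin, ne_eq, Multiset.map_eq_zero, mmax_map_neg, gt_iff_lt,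
    neg_lt_neg_iff] at h ⊢
  tauto

lemma gtMS.map_neg {S T : Multiset ℤ} (h : gtMS S T) :
    gtDMS (T.map Neg.neg) (S.map Neg.neg) := by
  obtain ⟨W, U, V, hU, rfl, rfl, hUV⟩ := h
  exact ⟨W.map Neg.neg, V.map Neg.neg, U.map Neg.neg, by simpa using hU,
    Multiset.map_add _ _ _, Multiset.map_add _ _ _, hUV.map_neg⟩

lemma gtDMS.map_neg {S T : Multiset ℤ} (h : gtDMS S T) :
    gtMS (T.map Neg.neg) (S.map Neg.neg) := by
  obtain ⟨W, U, V, hV, rfl, rfl, hUV⟩ := h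
  exact ⟨W.map Neg.neg, V.map Neg.neg, U.map Neg.neg, by simpa using hV,
    Multiset.map_add _ _ _, Multiset.map_add _ _ _, hUV.map_neg⟩

lemma geMS.map_neg {S T : Multiset ℤ} (h : geMS S T) :
    geDMS (T.map Neg.neg) (S.map Neg.neg) :=
  h.imp gtMS.map_neg fun hST => congrArg _ hST.symm

lemma geDMS.map_neg {S T : Multiset ℤ} (h : geDMS S T) :
    geMS (T.map Neg.neg) (S.map Neg.neg) :=
  h.imp gtDMS.map_neg fun hST => congrArg _ hST.symm

theorem neg_swaps_ms_dms_general (S T : Multiset ℤ) :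
    (geMS S T → geDMS (T.map Neg.neg) (S.map Neg.neg)) ∧
    (gtMS S T → gtDMS (T.map Neg.neg) (S.map Neg.neg)) ∧
    (geDMS S T → geMS (T.map Neg.neg) (S.map Neg.neg)) ∧
    (gtDMS S T → gtMS (T.map Neg.neg) (S.map Neg.neg)) :=
  ⟨geMS.map_neg, gtMS.map_neg, geDMS.map_neg, gtDMS.map_neg⟩

/-- Negation swaps the multiset and dual multiset orders. -/
theorem neg_swaps_ms_dms (S T : Multiset ℤ) (hS : S ≠ 0) (hT : T ≠ 0) :
    (geMS S T → geDMS (T.map Neg.neg) (S.map Neg.neg)) ∧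
    (gtMS S T → gtDMS (T.map Neg.neg) (S.map Neg.neg)) ∧
    (geDMS S T → geMS (T.map Neg.neg) (S.map Neg.neg)) ∧
    (gtDMS S T → gtMS (T.map Neg.neg) (S.map Neg.neg)) :=
  neg_swaps_ms_dms_general S T
end

section
/- For all multisets S and T of integers: S ≻dms T holds if and only if List.Lex (· > ·) aS aT holds, where aS and aT are the lists of elements of S and T, respectively, sorted in non-decreasing order (so that at the first position where the sorted lists differ, S has the larger element, with the convention that a list is greater than any list of which it is a proper prefix). -/
/-! Adding a common element to both sides preserves `≻dms` and, via `List.orderedInsert`, the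
lexicographic order of the sorted lists. This reduces both directions to `W = 0`, where `≻min`
compares minima, i.e. heads of the sorted lists, and the empty multiset (the empty list) lies
above every nonempty one. -/

section LinearOrder

variable {α : Type*} [LinearOrder α]

theorem Multiset.sort_cons_eq_orderedInsert (a : α) (s : Multiset α) :
    (a ::ₘ s).sort (· ≤ ·) = (s.sort (· ≤ ·)).orderedInsert (· ≤ ·) a := by
  refine List.Perm.eq_of_pairwise' (Multiset.pairwise_sort _ _)
    ((Multiset.pairwise_sort _ _).orderedInsert a _) ?_
  rw [← Multiset.coe_eq_coe, Multiset.coe_eq_coe.2 (List.perm_orderedInsert _ a _),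
    ← Multiset.cons_coe, Multiset.sort_eq, Multiset.sort_eq]

theorem Multiset.exists_sort_eq_cons {s : Multiset α} (hs : s ≠ 0) :
    ∃ a l, s.sort (· ≤ ·) = a :: l :=
  List.exists_cons_of_ne_nil fun h => hs <| by
    rw [← Multiset.sort_eq s (· ≤ ·), h, Multiset.coe_nil]

theorem List.Lex.orderedInsert (a : α) {l₁ l₂ : List α} (h : List.Lex (· > ·) l₁ l₂) :
    List.Lex (· > ·) (l₁.orderedInsert (· ≤ ·) a) (l₂.orderedInsert (· ≤ ·) a) := by
  induction h with
  | nil =>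
    simp only [List.orderedInsert]
    split_ifs with hab
    · exact .cons .nil
    · exact .rel (not_le.1 hab)
  | @rel x xs y ys hxy =>
    simp only [List.orderedInsert]
    split_ifs with hax hay hay
    · exact .cons (.rel hxy)
    · exact .rel (not_le.1 hay)
    · exact absurd (hay.trans hxy.le) hax
    · exact .rel hxy
  | cons hlex ih =>
    simp only [List.orderedInsert]
    split_ifs
    · exact .cons (.cons hlex)
    · exact .cons ih

end LinearOrder

-- The coercion in the definition of `mmin` elaborates through the monad structure of
-- `Multiset`.
theorem mmin_eq_untopD_inf (S : Multiset ℤ) :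
    mmin S = WithTop.untopD 0 (S.map fun x : ℤ => (x : WithTop ℤ)).inf := by
  unfold mmin
  congr 2
  simp [Bind.bind, Multiset.bind_singleton]

theorem mmin_eq_of_forall_le {S : Multiset ℤ} {a : ℤ} (ha : a ∈ S)
    (h : ∀ x ∈ S, a ≤ x) : mmin S = a := by
  have : (S.map fun x : ℤ => (x : WithTop ℤ)).inf = a :=
    le_antisymm (Multiset.inf_le (Multiset.mem_map_of_mem _ ha)) <|
      Multiset.le_inf.2 fun _ hb => by
        obtain ⟨x, hx, rfl⟩ := Multiset.mem_map.1 hb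
        exact WithTop.coe_le_coe.2 (h x hx)
  rw [mmin_eq_untopD_inf, this, WithTop.untopD_coe]

theorem mmin_coe_cons {a : ℤ} {l : List ℤ} (h : (a :: l).Pairwise (· ≤ ·)) :
    mmin (a :: l : List ℤ) = a :=
  mmin_eq_of_forall_le (List.mem_cons_self ..) fun x hx =>
    (List.mem_cons.1 hx).elim (fun hxa => hxa.ge) ((List.pairwise_cons.1 h).1 x)

theorem mmin_eq_of_sort_eq_cons {S : Multiset ℤ} {a : ℤ} {l : List ℤ}
    (h : S.sort (· ≤ ·) = a :: l) : mmin S = a := by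
  rw [← Multiset.sort_eq S (· ≤ ·), h]
  exact mmin_coe_cons (h ▸ Multiset.pairwise_sort S _)

theorem lex_sort_of_gtMin {U V : Multiset ℤ} (hV : V ≠ 0) (h : gtMin U V) :
    List.Lex (· > ·) (U.sort (· ≤ ·)) (V.sort (· ≤ ·)) := by
  obtain ⟨v, vs, hv⟩ := Multiset.exists_sort_eq_cons hV
  rw [hv]
  rcases h with ⟨hU, -, hlt⟩ | ⟨rfl, -⟩
  · obtain ⟨u, us, hu⟩ := Multiset.exists_sort_eq_cons hU
    rw [hu]
    exact .rel (mmin_eq_of_sort_eq_cons hu ▸ mmin_eq_of_sort_eq_cons hv ▸ hlt)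
  · rw [Multiset.sort_zero]
    exact .nil

theorem lex_sort_of_gtDMS {S T : Multiset ℤ} (h : gtDMS S T) :
    List.Lex (· > ·) (S.sort (· ≤ ·)) (T.sort (· ≤ ·)) := by
  obtain ⟨W, U, V, hV, rfl, rfl, hUV⟩ := h
  induction W using Multiset.induction with
  | empty => simpa only [zero_add] using lex_sort_of_gtMin hV hUV
  | cons a W ih =>
    simp only [Multiset.cons_add, Multiset.sort_cons_eq_orderedInsert]
    exact ih.orderedInsert a

theorem gtDMS_cons (a : ℤ) {S T : Multiset ℤ} (h : gtDMS S T) :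
    gtDMS (a ::ₘ S) (a ::ₘ T) := by
  obtain ⟨W, U, V, hV, rfl, rfl, hUV⟩ := h
  exact ⟨a ::ₘ W, U, V, hV, (Multiset.cons_add ..).symm, (Multiset.cons_add ..).symm, hUV⟩

theorem gtDMS_of_lex {l₁ l₂ : List ℤ} (h : List.Lex (· > ·) l₁ l₂)
    (h₁ : l₁.Pairwise (· ≤ ·)) (h₂ : l₂.Pairwise (· ≤ ·)) : gtDMS l₁ l₂ := by
  induction h with
  | @nil b l =>
    exact ⟨0, 0, ↑(b :: l), by simp, rfl, (zero_add _).symm, .inr ⟨rfl, by simp⟩⟩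
  | @rel x xs y ys hxy =>
    refine ⟨0, ↑(x :: xs), ↑(y :: ys), by simp, (zero_add _).symm, (zero_add _).symm,
      .inl ⟨by simp, by simp, ?_⟩⟩
    rwa [mmin_coe_cons h₁, mmin_coe_cons h₂]
  | @cons x _ _ _ ih =>
    exact gtDMS_cons x (ih (List.pairwise_cons.1 h₁).2 (List.pairwise_cons.1 h₂).2)

/-- `S ≻dms T` iff the list of elements of `S` sorted in non-decreasing order is
lexicographically greater (w.r.t. `>`, a list being greater than its proper prefixes)
than that of `T`. -/
theorem gtDMS_iff_lex (S T : Multiset ℤ) :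
    gtDMS S T ↔
      List.Lex (· > ·) (Multiset.sort S (· ≤ ·)) (Multiset.sort T (· ≤ ·)) := by
  refine ⟨lex_sort_of_gtDMS, fun h => ?_⟩
  rw [← Multiset.sort_eq S (· ≤ ·), ← Multiset.sort_eq T (· ≤ ·)]
  exact gtDMS_of_lex h (Multiset.pairwise_sort _ _) (Multiset.pairwise_sort _ _)
end
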